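/- Let P be a strongly blocked lattice-free polytope in ℝ^d and let z ∈ ℤ^d be such that conv(P_I ∪ {z}) is lattice-free, where P_I = conv(P ∩ ℤ^d). Then z ∈ P_I. -/

import Mathlib

open scoped BigOperators

noncomputable section

/-- A point of `ℝ^d` is integral if all its coordinates are integers. -/
def IsIntegralPoint {d : ℕ} (x : Fin d → ℝ) : Prop := ∀ i, ∃ n : ℤ, x i = (n : ℝ)

/-- The set `ℤ^d` of integral points of `ℝ^d`. -/
def latticePts (d : ℕ) : Set (Fin d → ℝ) := {x | IsIntegralPoint x}

/-- A set `K ⊆ ℝ^d` is lattice-free if it is closed, convex, `d`-dimensional (nonempty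
interior) and its interior contains no integral point. -/
def IsLatticeFree {d : ℕ} (K : Set (Fin d → ℝ)) : Prop :=
  IsClosed K ∧ Convex ℝ K ∧ (interior K).Nonempty ∧ interior K ∩ latticePts d = ∅

/-- A set is maximal lattice-free if it is lattice-free and not properly contained in
another lattice-free set. -/
def IsMaxLatticeFree {d : ℕ} (K : Set (Fin d → ℝ)) : Prop :=
  IsLatticeFree K ∧ ∀ K' : Set (Fin d → ℝ), IsLatticeFree K' → K ⊆ K' → K = K'

/-- A polytope is the convex hull of a finite set of points. -/
def IsPolytope {d : ℕ} (P : Set (Fin d → ℝ)) : Prop :=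
  ∃ V : Finset (Fin d → ℝ), P = convexHull ℝ (V : Set (Fin d → ℝ))

/-- A polyhedron is a finite intersection of closed halfspaces. -/
def IsPolyhedron {d : ℕ} (P : Set (Fin d → ℝ)) : Prop :=
  ∃ (n : ℕ) (c : Fin n → (Fin d → ℝ)) (b : Fin n → ℝ),
    P = {x | ∀ j, ∑ i, c j i * x i ≤ b j}

/-- The integer hull of a set: the convex hull of its integral points. -/
def intHull {d : ℕ} (K : Set (Fin d → ℝ)) : Set (Fin d → ℝ) :=
  convexHull ℝ (K ∩ latticePts d)

/-- A polytope is integral if it is the convex hull of its integral points. -/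
def IsIntegralPolytope {d : ℕ} (P : Set (Fin d → ℝ)) : Prop :=
  IsPolytope P ∧ P = intHull P

/-- A facet of a `d`-dimensional closed convex set in `ℝ^d` : a nonempty exposed face of
dimension `d - 1`. -/
def IsFacet {d : ℕ} (P F : Set (Fin d → ℝ)) : Prop :=
  IsExposed ℝ P F ∧ F.Nonempty ∧ Module.finrank ℝ (vectorSpan ℝ F) + 1 = d

/-- A facet is blocked if its relative interior contains an integral point. -/
def IsBlocked {d : ℕ} (F : Set (Fin d → ℝ)) : Prop :=
  ∃ x ∈ intrinsicInterior ℝ F, IsIntegralPoint x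

/-- A facet `F` of a `d`-dimensional lattice-free polyhedron in `ℝ^d` is strongly blocked
if its integer hull is `(d-1)`-dimensional and the relative interior of the integer hull
contains an integral point. -/
def IsStronglyBlockedFacet {d : ℕ} (P F : Set (Fin d → ℝ)) : Prop :=
  IsFacet P F ∧ Module.finrank ℝ (vectorSpan ℝ (intHull F)) + 1 = d ∧
    ∃ x ∈ intrinsicInterior ℝ (intHull F), IsIntegralPoint x

/-- A polyhedron is strongly blocked if all its facets are strongly blocked. -/
def IsStronglyBlocked {d : ℕ} (P : Set (Fin d → ℝ)) : Prop :=
  ∀ F, IsFacet P F → IsStronglyBlockedFacet P F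

/-- Membership in the family `L^d` of weakly maximal integral lattice-free polytopes:
integral lattice-free polytopes not properly contained in another integral
lattice-free polytope. -/
def MemL {d : ℕ} (P : Set (Fin d → ℝ)) : Prop :=
  IsIntegralPolytope P ∧ IsLatticeFree P ∧
    ∀ Q : Set (Fin d → ℝ), IsIntegralPolytope Q → IsLatticeFree Q → P ⊆ Q → P = Q

/-- Membership in the family `M^d` of strongly maximal integral lattice-free polytopes:
integral lattice-free polytopes not properly contained in another lattice-free set. -/
def MemM {d : ℕ} (P : Set (Fin d → ℝ)) : Prop :=
  IsIntegralPolytope P ∧ IsLatticeFree P ∧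
    ∀ K : Set (Fin d → ℝ), IsLatticeFree K → P ⊆ K → P = K

/-- An affine transformation of `ℝ^d` is unimodular if it maps `ℤ^d` onto `ℤ^d`. -/
def IsUnimodular {d : ℕ} (A : (Fin d → ℝ) ≃ᵃ[ℝ] (Fin d → ℝ)) : Prop :=
  A '' latticePts d = latticePts d

/-- The relation on subsets of `ℝ^d` of coinciding up to an affine unimodular
transformation. -/
def UnimodEquiv {d : ℕ} (P Q : Set (Fin d → ℝ)) : Prop :=
  ∃ A : (Fin d → ℝ) ≃ᵃ[ℝ] (Fin d → ℝ), IsUnimodular A ∧ Q = A '' P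

/-- `κ(a) = 1/a₁ + ⋯ + 1/a_d`. -/
def kappa {d : ℕ} (a : Fin d → ℝ) : ℝ := ∑ i, (a i)⁻¹

/-- The axis-aligned simplex `T(a) = conv {0, a₁ e₁, …, a_d e_d}`. -/
def axisSimplex {d : ℕ} (a : Fin d → ℝ) : Set (Fin d → ℝ) :=
  convexHull ℝ (insert 0 (Set.range fun i => a i • (Pi.single i 1 : Fin d → ℝ)))

/-- The map `φ` replacing the last component `t` by `t+1, t(t+1)`. -/
def phiMap {d : ℕ} (a : Fin (d + 1) → ℝ) : Fin (d + 2) → ℝ :=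
  Fin.snoc (Fin.snoc (Fin.init a) (a (Fin.last d) + 1))
    (a (Fin.last d) * (a (Fin.last d) + 1))

/-- The map `ψ` replacing the last component `t` by
`t+3, t(t+1), (t+1)(t+3), (t+1)(t+3)`. -/
def psiMap {d : ℕ} (a : Fin (d + 1) → ℝ) : Fin (d + 4) → ℝ :=
  Fin.snoc (Fin.snoc (Fin.snoc (Fin.snoc (Fin.init a) (a (Fin.last d) + 3))
    (a (Fin.last d) * (a (Fin.last d) + 1)))
    ((a (Fin.last d) + 1) * (a (Fin.last d) + 3)))
    ((a (Fin.last d) + 1) * (a (Fin.last d) + 3))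

/-- The map `ξ` replacing the last component `t` by `(3/2)t, 3t`. -/
def xiMap {d : ℕ} (a : Fin (d + 1) → ℝ) : Fin (d + 2) → ℝ :=
  Fin.snoc (Fin.snoc (Fin.init a) (3 / 2 * a (Fin.last d))) (3 * a (Fin.last d))

/-- The composition `η = ξ ∘ ψ ∘ φ`. -/
def etaMap {d : ℕ} (a : Fin (d + 1) → ℝ) : Fin (d + 6) → ℝ :=
  xiMap (psiMap (phiMap a))

/-- The set `A_d` of representations of `1` as a sum of `d` Egyptian fractions,
with components sorted in ascending order. -/
def EgyptSet (d : ℕ) : Set (Fin d → ℕ) :=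
  {a | (∀ i, 0 < a i) ∧ Monotone a ∧ ∑ i, ((a i : ℝ))⁻¹ = 1}

end

/-! If `z ∉ P`, a hyperplane separating `z` from `P` can be rotated about `P` until it meets `P`
in a facet `F`; strong blocking gives an integral point `w` in the relative interior of the
`(d-1)`-dimensional set `F_I`. Some integral point of `P` lies strictly on the inner side of `F`:
otherwise `P ∩ ℤ^d` lies in the hyperplane `H` of `F`, so the integer hull of the facet
separating `P` from a point beyond `P` on that inner side spans `H` as well, which forces `P` to
be flat. With points of `conv (P_I ∪ {z})` strictly on both sides of `H`, `w` is an interior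
point of this lattice-free set, a contradiction. -/

open Set Module Filter Topology

section Interior

variable {E : Type*} [NormedAddCommGroup E] [NormedSpace ℝ E]

lemma vectorSpan_eq_top_of_nonempty_interior {s : Set E}
    (hs : (interior (convexHull ℝ s)).Nonempty) : vectorSpan ℝ s = ⊤ := by
  rw [← direction_affineSpan, affineSpan_eq_top_of_nonempty_interior hs,
    AffineSubspace.direction_top]

lemma eventually_mem_of_mem_intrinsicInterior {S : Set E} {w : E}
    (hw : w ∈ intrinsicInterior ℝ S) : ∀ᶠ y in 𝓝 w, y ∈ affineSpan ℝ S → y ∈ S := by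
  obtain ⟨w', hw', rfl⟩ := hw
  obtain ⟨U, hU, hUS⟩ := (mem_nhds_subtype _ _ _).1 (mem_interior_iff_mem_nhds.1 hw')
  filter_upwards [hU] with y hyU hyA
  exact hUS (show (⟨y, hyA⟩ : affineSpan ℝ S) ∈ Subtype.val ⁻¹' U from hyU)

variable [FiniteDimensional ℝ E]

/-- Near a relative interior point `w` of `S ⊆ {f = b}`, every point of `{b ≤ f}` lies on a
segment from a point of `S` to the apex `q`. -/
lemma eventually_mem_of_mem_intrinsicInterior_of_apex {S Q : Set E} {f : Dual ℝ E} {b : ℝ}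
    {w q : E} (hQ : Convex ℝ Q) (hSQ : S ⊆ Q) (hker : LinearMap.ker f ≤ vectorSpan ℝ S)
    (hw : w ∈ intrinsicInterior ℝ S) (hwb : f w = b) (hq : q ∈ Q) (hbq : b < f q) :
    ∀ᶠ x in 𝓝 w, b ≤ f x → x ∈ Q := by
  have hf : Continuous f := f.continuous_of_finiteDimensional
  set t : E → ℝ := fun x => (f x - b) / (f q - b)
  set y : E → E := fun x => (1 - t x)⁻¹ • (x - t x • q)
  have ht : Tendsto t (𝓝 w) (𝓝 0) := by
    have : ContinuousAt t w := by fun_prop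
    simpa [ContinuousAt, t, hwb] using this
  have hy : Tendsto y (𝓝 w) (𝓝 w) := by
    have := ((ht.const_sub 1).inv₀ (by norm_num)).smul (tendsto_id.sub (ht.smul_const q))
    simpa [y] using this
  have hwA : w ∈ affineSpan ℝ S := subset_affineSpan ℝ S (intrinsicInterior_subset hw)
  filter_upwards [ht.eventually (gt_mem_nhds one_pos),
    hy.eventually (eventually_mem_of_mem_intrinsicInterior hw)] with x ht1 hyS hbx
  have ht0 : 0 ≤ t x := div_nonneg (sub_nonneg.2 hbx) (sub_pos.2 hbq).le
  have hne : 1 - t x ≠ 0 := by linarith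
  have hfy : f (y x) = b := by
    have hfx : f x - t x * f q = (1 - t x) * b := by
      have : t x * (f q - b) = f x - b := div_mul_cancel₀ _ (sub_pos.2 hbq).ne'
      linarith
    simp only [y, map_smul, map_sub, smul_eq_mul, hfx, inv_mul_cancel_left₀ hne]
  have hyA : y x ∈ affineSpan ℝ S := by
    rw [← AffineSubspace.vsub_right_mem_direction_iff_mem hwA, direction_affineSpan]
    exact hker (by simp [hfy, hwb])
  have hx : x = (1 - t x) • y x + t x • q := by
    simp only [y, smul_inv_smul₀ hne]
    abel
  rw [hx]
  exact hQ (hSQ (hyS hyA)) hq (by linarith) ht0 (by ring)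

lemma mem_interior_of_mem_intrinsicInterior {S Q : Set E} {f : Dual ℝ E} {b : ℝ}
    {w u z : E} (hQ : Convex ℝ Q) (hSQ : S ⊆ Q) (hker : LinearMap.ker f ≤ vectorSpan ℝ S)
    (hw : w ∈ intrinsicInterior ℝ S) (hwb : f w = b) (hu : u ∈ Q) (hub : f u < b)
    (hz : z ∈ Q) (hbz : b < f z) : w ∈ interior Q := by
  rw [mem_interior_iff_mem_nhds]
  filter_upwards [eventually_mem_of_mem_intrinsicInterior_of_apex hQ hSQ hker hw hwb hz hbz,
    eventually_mem_of_mem_intrinsicInterior_of_apex (f := -f) (b := -b) hQ hSQ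
      (by rwa [LinearMap.ker_neg]) hw (by simp [hwb]) hu (by simpa using hub)] with x hxz hxu
  rcases le_total b (f x) with h | h
  · exact hxz h
  · exact hxu (by simpa using h)

end Interior

section Rotation

lemma exists_tilt_attaining_max {α : Type*} {V : Finset α} {f g : α → ℝ} {v₁ v₂ : α}
    (hmax : ∀ v ∈ V, f v ≤ f v₁) (hv₂ : v₂ ∈ V) (hg : g v₁ < g v₂) :
    ∃ θ : ℝ, ∃ v ∈ V, g v₁ < g v ∧ f v + θ * g v = f v₁ + θ * g v₁ ∧
      ∀ v ∈ V, f v + θ * g v ≤ f v₁ + θ * g v₁ := by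
  classical
  obtain ⟨vs, hvs, hmin⟩ := (V.filter fun v => g v₁ < g v).exists_min_image
    (fun v => (f v₁ - f v) / (g v - g v₁)) ⟨v₂, Finset.mem_filter.2 ⟨hv₂, hg⟩⟩
  rw [Finset.mem_filter] at hvs
  set θ := (f v₁ - f vs) / (g vs - g v₁)
  have hθ : 0 ≤ θ := div_nonneg (sub_nonneg.2 (hmax vs hvs.1)) (sub_pos.2 hvs.2).le
  refine ⟨θ, vs, hvs.1, hvs.2, ?_, fun v hv => ?_⟩
  · have := div_mul_cancel₀ (f v₁ - f vs) (sub_pos.2 hvs.2).ne'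
    linarith
  · by_cases hgv : g v₁ < g v
    · have := hmin v (Finset.mem_filter.2 ⟨hv, hgv⟩)
      rw [le_div_iff₀ (sub_pos.2 hgv)] at this
      linarith
    · nlinarith [hmax v hv]

variable {E : Type*} [AddCommGroup E] [Module ℝ E]

lemma vectorSpan_le_ker {S : Set E} {f : Dual ℝ E} {b : ℝ} (hS : ∀ x ∈ S, f x = b) :
    vectorSpan ℝ S ≤ LinearMap.ker f := by
  rw [vectorSpan_def, Submodule.span_le]
  rintro _ ⟨x, hx, y, hy, rfl⟩
  simp [hS x hx, hS y hy]

variable [FiniteDimensional ℝ E]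

lemma vectorSpan_eq_ker {S : Set E} {f : Dual ℝ E} {b : ℝ} (hf : f ≠ 0)
    (hS : ∀ x ∈ S, f x = b) (hrank : finrank ℝ (vectorSpan ℝ S) + 1 = finrank ℝ E) :
    vectorSpan ℝ S = LinearMap.ker f :=
  Submodule.eq_of_le_of_finrank_le (vectorSpan_le_ker hS)
    (by have := f.finrank_ker_add_one_of_ne_zero hf; omega)

/-- `f'` is `f + θ • g`, where `g` vanishes on the active face and on `z - v₁` and `θ` is given
by the ratio test `exists_tilt_attaining_max`. -/
lemma exists_tilt_vectorSpan_lt {V : Finset E} {f : Dual ℝ E} {v₁ : E}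
    (hV : vectorSpan ℝ (V : Set E) = ⊤) (hv₁ : v₁ ∈ V) (hmax : ∀ v ∈ V, f v ≤ f v₁)
    (hrank : finrank ℝ (vectorSpan ℝ {v ∈ (V : Set E) | f v = f v₁}) + 1 < finrank ℝ E)
    (z : E) :
    ∃ f' : Dual ℝ E, (∀ v ∈ V, f' v ≤ f' v₁) ∧ f' (z - v₁) = f (z - v₁) ∧
      vectorSpan ℝ {v ∈ (V : Set E) | f v = f v₁} <
        vectorSpan ℝ {v ∈ (V : Set E) | f' v = f' v₁} := by
  set A := {v ∈ (V : Set E) | f v = f v₁}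
  set U := vectorSpan ℝ A ⊔ ℝ ∙ (z - v₁)
  have hU : U ≠ ⊤ := by
    intro hU
    have h1 : finrank ℝ U ≤ _ :=
      Submodule.finrank_add_le_finrank_add_finrank (vectorSpan ℝ A) (ℝ ∙ (z - v₁))
    have h2 : finrank ℝ (ℝ ∙ (z - v₁)) ≤ 1 := by
      simpa using finrank_span_le_card (R := ℝ) ({z - v₁} : Set E)
    rw [hU, finrank_top] at h1
    omega
  obtain ⟨v₂, hv₂, hv₂U⟩ : ∃ v ∈ V, v - v₁ ∉ U := by
    by_contra! h
    apply hU
    rw [eq_top_iff, ← hV, vectorSpan_eq_span_vsub_set_right ℝ (Finset.mem_coe.2 hv₁),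
      Submodule.span_le]
    rintro _ ⟨v, hv, rfl⟩
    exact h v hv
  obtain ⟨g, hgU, hg⟩ : ∃ g : Dual ℝ E, (∀ x ∈ U, g x = 0) ∧ g v₁ < g v₂ := by
    obtain ⟨g, hg₂, hgU⟩ := Submodule.exists_dual_map_eq_bot_of_notMem hv₂U inferInstance
    have hgU' : ∀ x ∈ U, g x = 0 := fun x hx => by
      simpa [hgU] using Submodule.mem_map_of_mem (f := g) hx
    rw [map_sub] at hg₂
    rcases hg₂.lt_or_gt with h | h
    · exact ⟨-g, by simpa using hgU', by simp; linarith⟩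
    · exact ⟨g, hgU', by linarith⟩
  have hv₁A : v₁ ∈ A := ⟨hv₁, rfl⟩
  have hgA : ∀ v ∈ A, g v = g v₁ := fun v hv => by
    have := hgU _ (Submodule.mem_sup_left (vsub_mem_vectorSpan ℝ hv hv₁A))
    simpa [sub_eq_zero] using this
  obtain ⟨θ, vs, hvs, hgvs, hvs_eq, hmax'⟩ := exists_tilt_attaining_max hmax hv₂ hg
  refine ⟨f + θ • g, by simpa using hmax', ?_, ?_⟩
  · simp [hgU _ (Submodule.mem_sup_right (Submodule.mem_span_singleton_self _))]
  refine lt_of_le_of_ne (vectorSpan_mono ℝ fun v hv => ⟨hv.1, by simp [hv.2, hgA v hv]⟩)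
    fun heq => ?_
  have hvsA : vs -ᵥ v₁ ∈ vectorSpan ℝ A :=
    heq ▸ vsub_mem_vectorSpan ℝ ⟨hvs, by simpa using hvs_eq⟩ ⟨hv₁, rfl⟩
  have := hgU _ (Submodule.mem_sup_left hvsA)
  simp only [vsub_eq_sub, map_sub, sub_eq_zero] at this
  linarith

lemma exists_tilt_finrank_active_ge {V : Finset E} {f : Dual ℝ E} {v₁ z : E}
    (hV : vectorSpan ℝ (V : Set E) = ⊤) (hv₁ : v₁ ∈ V) (hmax : ∀ v ∈ V, f v ≤ f v₁)
    (hz : f v₁ < f z) :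
    ∃ f' : Dual ℝ E, (∀ v ∈ V, f' v ≤ f' v₁) ∧ f' v₁ < f' z ∧
      finrank ℝ E ≤ finrank ℝ (vectorSpan ℝ {v ∈ (V : Set E) | f' v = f' v₁}) + 1 := by
  induction h : finrank ℝ E - finrank ℝ (vectorSpan ℝ {v ∈ (V : Set E) | f v = f v₁})
    using Nat.strong_induction_on generalizing f with
  | _ n ih =>
    by_cases hle : finrank ℝ E ≤ finrank ℝ (vectorSpan ℝ {v ∈ (V : Set E) | f v = f v₁}) + 1
    · exact ⟨f, hmax, hz, hle⟩
    obtain ⟨f', hmax', hzf', hlt⟩ := exists_tilt_vectorSpan_lt hV hv₁ hmax (by omega) z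
    have h1 := Submodule.finrank_lt_finrank_of_lt hlt
    have h2 := Submodule.finrank_le (vectorSpan ℝ {v ∈ (V : Set E) | f' v = f' v₁})
    simp only [map_sub] at hzf'
    exact ih _ (by omega) hmax' (by linarith) rfl

end Rotation

lemma exists_isFacet_of_notMem {d : ℕ} {V : Finset (Fin d → ℝ)}
    (hP : (interior (convexHull ℝ (V : Set (Fin d → ℝ)))).Nonempty) {z : Fin d → ℝ}
    (hz : z ∉ convexHull ℝ (V : Set (Fin d → ℝ))) :
    ∃ (F : Set (Fin d → ℝ)) (f : Dual ℝ (Fin d → ℝ)) (b : ℝ),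
      IsFacet (convexHull ℝ (V : Set (Fin d → ℝ))) F ∧ f ≠ 0 ∧
      (∀ x ∈ convexHull ℝ (V : Set (Fin d → ℝ)), f x ≤ b) ∧ (∀ x ∈ F, f x = b) ∧ b < f z := by
  set P := convexHull ℝ (V : Set (Fin d → ℝ))
  have hV := vectorSpan_eq_top_of_nonempty_interior hP
  obtain ⟨p, hp⟩ := hP
  obtain ⟨f₀, c, hf₀P, hf₀z⟩ := geometric_hahn_banach_closed_point (convex_convexHull ℝ _)
    (V.finite_toSet.isCompact_convexHull (𝕜 := ℝ)).isClosed hz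
  obtain ⟨v₁, hv₁, hmax⟩ := V.exists_max_image f₀
    (Finset.coe_nonempty.1 (convexHull_nonempty_iff.1 ⟨p, interior_subset hp⟩))
  obtain ⟨f, hfV, hfz, hrank⟩ :=
    exists_tilt_finrank_active_ge (f := (f₀ : Dual ℝ (Fin d → ℝ))) (z := z) hV hv₁ hmax
      (show f₀ v₁ < f₀ z by linarith [hf₀P v₁ (subset_convexHull ℝ _ hv₁)])
  have hf : f ≠ 0 := by
    rintro rfl
    simp at hfz
  have hfP : ∀ x ∈ P, f x ≤ f v₁ := fun x hx =>
    convexHull_min (fun v hv => hfV v hv) (convex_halfSpace_le f.isLinear _) hx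
  have hv₁P : v₁ ∈ P := subset_convexHull ℝ _ hv₁
  set F := (LinearMap.toContinuousLinearMap f).toExposed P
  have hFb : ∀ x ∈ F, f x = f v₁ := fun x hx => le_antisymm (hfP x hx.1) (hx.2 v₁ hv₁P)
  have hAF : vectorSpan ℝ {v ∈ (V : Set (Fin d → ℝ)) | f v = f v₁} ≤ vectorSpan ℝ F :=
    vectorSpan_mono ℝ fun v hv => ⟨subset_convexHull ℝ _ hv.1, fun y hy => hv.2 ▸ hfP y hy⟩
  have h1 := Submodule.finrank_mono hAF
  have h2 := Submodule.finrank_mono (vectorSpan_le_ker hFb)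
  have h3 := f.finrank_ker_add_one_of_ne_zero hf
  rw [finrank_fin_fun] at hrank h3
  exact ⟨F, f, f v₁, ⟨ContinuousLinearMap.toExposed.isExposed, ⟨v₁, hv₁P, hfP⟩, by omega⟩,
    hf, hfP, hFb, hfz⟩

lemma apply_eq_of_mem_intHull {d : ℕ} {K : Set (Fin d → ℝ)} {f : Dual ℝ (Fin d → ℝ)} {b : ℝ}
    (hK : ∀ x ∈ K ∩ latticePts d, f x = b) : ∀ x ∈ intHull K, f x = b := fun _ hx =>
  convexHull_min hK (convex_hyperplane f.isLinear b) hx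

lemma exists_integral_lt_of_isStronglyBlocked {d : ℕ} {V : Finset (Fin d → ℝ)}
    (hP : (interior (convexHull ℝ (V : Set (Fin d → ℝ)))).Nonempty)
    (hsb : IsStronglyBlocked (convexHull ℝ (V : Set (Fin d → ℝ))))
    {f : Dual ℝ (Fin d → ℝ)} {b : ℝ} (hf : f ≠ 0)
    (hfP : ∀ x ∈ convexHull ℝ (V : Set (Fin d → ℝ)), f x ≤ b) :
    ∃ u ∈ convexHull ℝ (V : Set (Fin d → ℝ)) ∩ latticePts d, f u < b := by
  set P := convexHull ℝ (V : Set (Fin d → ℝ))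
  by_contra! hPZ
  obtain ⟨v₀, hv₀, hmin⟩ := V.exists_min_image f
    (Finset.coe_nonempty.1 (convexHull_nonempty_iff.1 (hP.mono interior_subset)))
  have hv₀P : v₀ ∈ P := subset_convexHull ℝ _ hv₀
  obtain ⟨e, he⟩ : ∃ e, 0 < f e := by
    obtain ⟨x, hx⟩ := DFunLike.ne_iff.1 hf
    rcases hx.lt_or_gt with h | h
    · exact ⟨-x, by simpa using h⟩
    · exact ⟨x, h⟩
  have hz : v₀ - e ∉ P := fun h => by
    have : f v₀ ≤ f (v₀ - e) :=
      convexHull_min (fun v hv => hmin v hv) (convex_halfSpace_ge f.isLinear (f v₀)) h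
    rw [map_sub] at this
    linarith
  obtain ⟨F, g, c, hF, hg, hgP, hgF, hcz⟩ := exists_isFacet_of_notMem hP hz
  obtain ⟨-, hrank, w, hw, -⟩ := hsb F hF
  have hwS := intrinsicInterior_subset hw
  have hSf := apply_eq_of_mem_intHull (K := F) (f := f) (b := b) fun y hy =>
    le_antisymm (hfP y (hF.1.subset hy.1)) (hPZ y ⟨hF.1.subset hy.1, hy.2⟩)
  have hSg := apply_eq_of_mem_intHull (K := F) fun y hy => hgF y hy.1
  have hker : LinearMap.ker g ≤ LinearMap.ker f := by
    rw [← vectorSpan_eq_ker hg hSg (by rwa [finrank_fin_fun])]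
    exact vectorSpan_le_ker hSf
  -- the ray from `v₀` in direction `-e` crosses the hyperplane `{g = c}`, which lies in `{f = b}`
  have hge : g e < 0 := by
    have := hgP v₀ hv₀P
    rw [map_sub] at hcz
    linarith
  set t := (g v₀ - c) / g e
  have ht : 0 ≤ t := div_nonneg_of_nonpos (by linarith [hgP v₀ hv₀P]) hge.le
  have hgy : g (v₀ - t • e) = c := by
    simp only [map_sub, map_smul, smul_eq_mul, t, div_mul_cancel₀ _ hge.ne]
    ring
  have hfy : f (v₀ - t • e) = b := by
    have : v₀ - t • e - w ∈ LinearMap.ker f := hker (by simp [hgy, hSg w hwS])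
    simpa [sub_eq_zero, hSf w hwS] using this
  have hfV : ∀ v ∈ V, f v = b := fun v hv => by
    have : f (v₀ - t • e) ≤ f v₀ := by
      simp only [map_sub, map_smul, smul_eq_mul]
      nlinarith
    linarith [hmin v hv, hfP v (subset_convexHull ℝ _ hv)]
  apply hf
  rw [← LinearMap.ker_eq_top, eq_top_iff, ← vectorSpan_eq_top_of_nonempty_interior hP]
  exact vectorSpan_le_ker hfV

/-- if `P` is a strongly blocked lattice-free polytope, `z ∈ ℤ^d` and
`conv (P_I ∪ {z})` is lattice-free, then `z ∈ P_I`. -/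
theorem statement5 {d : ℕ} (P : Set (Fin d → ℝ)) (hpoly : IsPolytope P)
    (hlf : IsLatticeFree P) (hsb : IsStronglyBlocked P) (z : Fin d → ℝ)
    (hz : IsIntegralPoint z)
    (h : IsLatticeFree (convexHull ℝ (intHull P ∪ {z}))) :
    z ∈ intHull P := by
  obtain ⟨V, rfl⟩ := hpoly
  by_contra hzI
  have hzP : z ∉ convexHull ℝ (V : Set (Fin d → ℝ)) := fun hzP =>
    hzI (subset_convexHull ℝ _ ⟨hzP, hz⟩)
  obtain ⟨F, f, b, hF, hf, hfP, hfF, hbz⟩ := exists_isFacet_of_notMem hlf.2.2.1 hzP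
  obtain ⟨-, hrank, w, hw, hwZ⟩ := hsb F hF
  obtain ⟨u, hu, hub⟩ := exists_integral_lt_of_isStronglyBlocked hlf.2.2.1 hsb hf hfP
  have hSf := apply_eq_of_mem_intHull (K := F) fun y hy => hfF y hy.1
  have hPQ : intHull (convexHull ℝ (V : Set (Fin d → ℝ))) ⊆ convexHull ℝ (intHull _ ∪ {z}) :=
    subset_union_left.trans (subset_convexHull ℝ _)
  have hwQ : w ∈ interior (convexHull ℝ (intHull _ ∪ {z})) :=
    mem_interior_of_mem_intrinsicInterior (convex_convexHull ℝ _)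
      ((convexHull_mono (inter_subset_inter_left _ hF.1.subset)).trans hPQ)
      (vectorSpan_eq_ker hf hSf (by rwa [finrank_fin_fun])).ge hw
      (hSf w (intrinsicInterior_subset hw)) (hPQ (subset_convexHull ℝ _ hu)) hub
      (subset_convexHull ℝ _ (Or.inr rfl)) hbz
  exact (eq_empty_iff_forall_notMem.1 h.2.2.2) w ⟨hwQ, hwZ⟩
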